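/- arXiv:2503.03628 — 3 statements merged into one kernel-verified Lean document; each statement's English description precedes it below -/
import Mathlib

section
/- The Liouville fractional Brownian kernel K(t,s) = (t-s)^{H-1/2} 𝟙_{[0,t)}(s) (up to the constant 1/Γ(H+1/2)) with H ∈ (0, 1/2) satisfies: there exists C > 0 such that ∫_0^T (K(t,r) - K(s,r))² dr ≤ C |t-s|^{2H} for all 0 ≤ s ≤ t ≤ T. -/
open Real MeasureTheory

private lemma aux_intble (c : ℝ) {q : ℝ} (hq : -1 < q) (a b : ℝ) :
    IntervalIntegrable (fun r => (c - r) ^ q) volume a b := by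
  have h := (intervalIntegral.intervalIntegrable_rpow' (a := c - a) (b := c - b) hq).comp_sub_left c
  simpa using h

private lemma aux_eval {q : ℝ} (hq : -1 < q) (c a b : ℝ) :
    ∫ r in a..b, (c - r) ^ q = ((c - a) ^ (q + 1) - (c - b) ^ (q + 1)) / (q + 1) := by
  rw [intervalIntegral.integral_comp_sub_left (fun x => x ^ q) c, integral_rpow (Or.inl hq)]

/-- The Liouville fractional Brownian kernel `K(t,s) = (t-s)^{H-1/2} 𝟙_{[0,t)}(s)`
with `H ∈ (0,1/2)` satisfies: there exists `C > 0` such that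
`∫_0^T (K(t,r) - K(s,r))² dr ≤ C |t-s|^{2H}` for all `0 ≤ s ≤ t ≤ T`. -/
theorem liouville_kernel_increment_bound (T H : ℝ) (hT : 0 < T)
    (hH0 : 0 < H) (hH : H < 1 / 2) :
    ∃ C : ℝ, 0 < C ∧ ∀ s t, 0 ≤ s → s ≤ t → t ≤ T →
      (∫ r in Set.Icc 0 T,
        ((if 0 ≤ r ∧ r < t then (t - r) ^ (H - 1 / 2) else 0) -
         (if 0 ≤ r ∧ r < s then (s - r) ^ (H - 1 / 2) else 0)) ^ 2) ≤
        C * (t - s) ^ (2 * H) := by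
  refine ⟨1 / H, by positivity, fun s t hs hst htT => ?_⟩
  have hts : 0 ≤ t - s := sub_nonneg.2 hst
  set p : ℝ := H - 1 / 2 with hp
  have h2p : (-1 : ℝ) < 2 * p := by rw [hp]; linarith
  have h2pne : 2 * p ≠ 0 := by rw [hp]; intro h; linarith
  have h2p1 : 2 * p + 1 = 2 * H := by rw [hp]; ring
  have hpneg : p ≤ 0 := by rw [hp]; linarith
  have h2Hpos : (0 : ℝ) < 2 * H := by linarith
  set F : ℝ → ℝ := fun r =>
    ((if 0 ≤ r ∧ r < t then (t - r) ^ p else 0) -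
     (if 0 ≤ r ∧ r < s then (s - r) ^ p else 0)) ^ 2 with hF
  have hsq : ∀ x : ℝ, 0 ≤ x → (x ^ p) ^ 2 = x ^ (2 * p) := fun x hx => by
    rw [← Real.rpow_natCast (x ^ p) 2, ← Real.rpow_mul hx]
    norm_num [mul_comm]
  have hFmeas : Measurable F := by
    apply Measurable.pow_const
    apply Measurable.sub <;>
      exact Measurable.ite measurableSet_Ico (by fun_prop) measurable_const
  -- integrability on [0, s]
  have h1 : IntervalIntegrable F volume 0 s := by
    rw [intervalIntegrable_iff_integrableOn_Ioc_of_le hs, integrableOn_Ioc_iff_integrableOn_Ioo]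
    refine Integrable.mono'
      (((intervalIntegrable_iff_integrableOn_Ioc_of_le hs).1
        (aux_intble s h2p 0 s)).mono_set Set.Ioo_subset_Ioc_self)
      hFmeas.aestronglyMeasurable ?_
    filter_upwards [ae_restrict_mem measurableSet_Ioo] with r hr
    obtain ⟨hr0, hrs⟩ := hr
    have hrt : r < t := lt_of_lt_of_le hrs hst
    have hsrp : 0 < s - r := sub_pos.2 hrs
    have htrp : 0 < t - r := sub_pos.2 hrt
    simp only [hF]
    rw [if_pos ⟨hr0.le, hrt⟩, if_pos ⟨hr0.le, hrs⟩, Real.norm_eq_abs,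
      abs_of_nonneg (sq_nonneg _), ← hsq _ hsrp.le]
    have ha : 0 < (t - r) ^ p := Real.rpow_pos_of_pos htrp p
    have hab : (t - r) ^ p ≤ (s - r) ^ p :=
      Real.rpow_le_rpow_of_nonpos hsrp (by linarith) hpneg
    nlinarith [mul_le_mul_of_nonneg_left hab ha.le]
  -- integrability on [s, t]
  have h2 : IntervalIntegrable F volume s t := by
    rw [intervalIntegrable_iff_integrableOn_Ioc_of_le hst]
    refine ((intervalIntegrable_iff_integrableOn_Ioc_of_le hst).1
      (aux_intble t h2p s t)).congr_fun ?_ measurableSet_Ioc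
    intro r hr
    obtain ⟨hsr, hrt⟩ := hr
    by_cases h : r < t
    · simp only [hF]
      rw [if_pos ⟨hs.trans hsr.le, h⟩, if_neg (fun hc => absurd hc.2 (not_lt.2 hsr.le)),
        sub_zero, hsq _ (sub_pos.2 h).le]
    · have : r = t := le_antisymm hrt (not_lt.1 h)
      subst this
      simp [hF, lt_irrefl, hst.not_gt, Real.zero_rpow h2pne]
  -- integrability on [t, T]
  have h3 : IntervalIntegrable F volume t T := by
    rw [intervalIntegrable_iff_integrableOn_Ioc_of_le htT]
    refine (integrableOn_zero).congr_fun ?_ measurableSet_Ioc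
    intro r hr
    have hrt : ¬ r < t := not_lt.2 hr.1.le
    have hrs : ¬ r < s := not_lt.2 (hst.trans hr.1.le)
    simp [hF, hrt, hrs]
  have hIcc : ∫ r in Set.Icc 0 T, F r = ∫ r in (0:ℝ)..T, F r := by
    rw [MeasureTheory.integral_Icc_eq_integral_Ioc, ← intervalIntegral.integral_of_le hT.le]
  have hsplit : (∫ r in (0:ℝ)..s, F r) + (∫ r in s..t, F r) + (∫ r in t..T, F r)
      = ∫ r in (0:ℝ)..T, F r := by
    rw [intervalIntegral.integral_add_adjacent_intervals h1 h2]
    exact intervalIntegral.integral_add_adjacent_intervals (h1.trans h2) h3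
  have e3 : ∫ r in t..T, F r = 0 := by
    have : ∫ r in t..T, F r = ∫ r in t..T, (0 : ℝ) := by
      apply intervalIntegral.integral_congr
      intro r hr
      rw [Set.uIcc_of_le htT] at hr
      have hrt : ¬ r < t := not_lt.2 hr.1
      have hrs : ¬ r < s := not_lt.2 (hst.trans hr.1)
      simp [hF, hrt, hrs]
    rw [this, intervalIntegral.integral_zero]
  have e2 : ∫ r in s..t, F r = (t - s) ^ (2 * H) / (2 * H) := by
    have heq : ∫ r in s..t, F r = ∫ r in s..t, (t - r) ^ (2 * p) := by
      apply intervalIntegral.integral_congr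
      intro r hr
      rw [Set.uIcc_of_le hst] at hr
      obtain ⟨hsr, hrt⟩ := hr
      by_cases h : r < t
      · simp only [hF]
        rw [if_pos ⟨hs.trans hsr, h⟩, if_neg (fun hc => absurd hc.2 (not_lt.2 hsr)),
          sub_zero, hsq _ (sub_pos.2 h).le]
      · have : r = t := le_antisymm hrt (not_lt.1 h)
        subst this
        simp [hF, lt_irrefl, hst.not_gt, Real.zero_rpow h2pne]
    rw [heq, aux_eval h2p, h2p1, sub_self, Real.zero_rpow h2Hpos.ne', sub_zero]
  have e1 : ∫ r in (0:ℝ)..s, F r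
      ≤ (s ^ (2 * H) - t ^ (2 * H) + (t - s) ^ (2 * H)) / (2 * H) := by
    have hGint : IntervalIntegrable (fun r => (s - r) ^ (2 * p) - (t - r) ^ (2 * p))
        volume 0 s := (aux_intble s h2p 0 s).sub (aux_intble t h2p 0 s)
    have hmono : ∫ r in (0:ℝ)..s, F r
        ≤ ∫ r in (0:ℝ)..s, ((s - r) ^ (2 * p) - (t - r) ^ (2 * p)) := by
      apply intervalIntegral.integral_mono_ae_restrict hs h1 hGint
      have hne : ∀ᵐ r ∂(volume : Measure ℝ), r ≠ s := by
        have hset : {x : ℝ | ¬ x ≠ s} = {s} := by ext x; simp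
        rw [ae_iff, hset]
        exact measure_singleton s
      filter_upwards [ae_restrict_of_ae hne, ae_restrict_mem measurableSet_Icc]
        with r hrne hrmem
      obtain ⟨hr0, hrs'⟩ := hrmem
      have hrs : r < s := lt_of_le_of_ne hrs' hrne
      have hrt : r < t := lt_of_lt_of_le hrs hst
      have hsrp : 0 < s - r := sub_pos.2 hrs
      have htrp : 0 < t - r := sub_pos.2 hrt
      simp only [hF]
      rw [if_pos ⟨hr0, hrt⟩, if_pos ⟨hr0, hrs⟩, ← hsq _ hsrp.le, ← hsq _ htrp.le]
      have ha : 0 < (t - r) ^ p := Real.rpow_pos_of_pos htrp p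
      have hab : (t - r) ^ p ≤ (s - r) ^ p :=
        Real.rpow_le_rpow_of_nonpos hsrp (by linarith) hpneg
      nlinarith [mul_le_mul_of_nonneg_left hab ha.le]
    refine hmono.trans (le_of_eq ?_)
    rw [intervalIntegral.integral_sub (aux_intble s h2p 0 s) (aux_intble t h2p 0 s),
      aux_eval h2p, aux_eval h2p, h2p1]
    simp only [sub_zero, sub_self, Real.zero_rpow h2Hpos.ne']
    ring
  rw [hIcc, ← hsplit, e2, e3, add_zero]
  have hstH : s ^ (2 * H) ≤ t ^ (2 * H) := Real.rpow_le_rpow hs hst h2Hpos.le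
  have hD : 0 ≤ (t - s) ^ (2 * H) := Real.rpow_nonneg hts _
  have key : (s ^ (2 * H) - t ^ (2 * H) + (t - s) ^ (2 * H)) / (2 * H)
      + (t - s) ^ (2 * H) / (2 * H) ≤ 1 / H * (t - s) ^ (2 * H) := by
    rw [← add_div, div_le_iff₀ h2Hpos]
    have : 1 / H * (t - s) ^ (2 * H) * (2 * H) = 2 * (t - s) ^ (2 * H) := by
      field_simp
    rw [this]; linarith
  linarith [e1, key]
end

section
/- The Liouville fractional Brownian kernel K(t,s) = (t-s)^{H-1/2} 𝟙_{[0,t)}(s) with H ∈ (0,1/2) satisfies condition (K2): there exists C > 0 such that for all t ∈ [0,1], sup_{τ ∈ [0,1]} ∫_0^{1-t} |K(t+s, τ) - K(s, τ)| ds ≤ C t^{H+1/2}. -/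
open Real MeasureTheory Set

/-- The Liouville fractional Brownian kernel `K(t,s) = (t-s)^{H-1/2} 𝟙_{[0,t)}(s)`
with `H ∈ (0,1/2)` satisfies condition (K2): there exists `C > 0` such that for all
`t ∈ [0,1]`, `sup_{τ ∈ [0,1]} ∫_0^{1-t} |K(t+s,τ) - K(s,τ)| ds ≤ C t^{H+1/2}`. -/
theorem liouville_kernel_K2 (H : ℝ) (hH0 : 0 < H) (hH : H < 1 / 2) :
    ∃ C : ℝ, 0 < C ∧ ∀ t ∈ Set.Icc (0 : ℝ) 1, ∀ τ ∈ Set.Icc (0 : ℝ) 1,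
      (∫ s in Set.Icc (0 : ℝ) (1 - t),
        |(if 0 ≤ τ ∧ τ < t + s then (t + s - τ) ^ (H - 1 / 2) else 0) -
         (if 0 ≤ τ ∧ τ < s then (s - τ) ^ (H - 1 / 2) else 0)|) ≤ C * t ^ (H + 1 / 2) := by
  have hα : (-1 : ℝ) < H - 1 / 2 := by linarith
  have hα0 : H - 1 / 2 ≤ 0 := by linarith
  have hp : (0 : ℝ) < H + 1 / 2 := by linarith
  refine ⟨2 / (H + 1 / 2), by positivity, ?_⟩
  rintro t ⟨ht0, ht1⟩ τ ⟨hτ0, hτ1⟩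
  set α := H - 1 / 2 with hαdef
  have hpe : α + 1 = H + 1 / 2 := by rw [hαdef]; ring
  set f1 : ℝ → ℝ := fun s => (s - (τ - t)) ^ α with hf1
  set f2 : ℝ → ℝ := fun s => (s - τ) ^ α with hf2
  set g : ℝ → ℝ := fun s =>
    (Ioc (τ - t) τ).indicator f1 s + (Ioi τ).indicator (fun s => f2 s - f1 s) s with hg
  have hτt : τ - t ≤ τ := by linarith
  -- interval integrability of f1 and f2 on any interval
  have hif1 : ∀ a b : ℝ, IntervalIntegrable f1 volume a b := by
    intro a b
    have := (intervalIntegral.intervalIntegrable_rpow' (a := a - (τ - t)) (b := b - (τ - t)) hα).comp_sub_right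
      (τ - t)
    simpa [hf1] using this
  have hif2 : ∀ a b : ℝ, IntervalIntegrable f2 volume a b := by
    intro a b
    have := (intervalIntegral.intervalIntegrable_rpow' (a := a - τ) (b := b - τ) hα).comp_sub_right τ
    simpa [hf2] using this
  -- integral computations
  have hcomp1 : ∀ a b c : ℝ, ∫ s in a..b, (s - c) ^ α =
      ((b - c) ^ (α + 1) - (a - c) ^ (α + 1)) / (α + 1) := by
    intro a b c
    rw [intervalIntegral.integral_comp_sub_right (fun x => x ^ α) c, integral_rpow (Or.inl hα)]
  -- integrability of g on the Icc
  have hmeasIoc : MeasurableSet (Ioc (τ - t) τ) := measurableSet_Ioc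
  have hmeasIoi : MeasurableSet (Ioi τ) := measurableSet_Ioi
  have hint1 : IntegrableOn f1 (Ioc (τ - t) τ) volume := by
    have := (hif1 (τ - t) τ)
    rwa [intervalIntegrable_iff, uIoc_of_le hτt] at this
  have hg1int : Integrable ((Ioc (τ - t) τ).indicator f1) volume :=
    hint1.integrable_indicator hmeasIoc
  have hint2 : IntegrableOn (fun s => f2 s - f1 s) (Ioc τ (1 - t)) volume := by
    rcases le_or_gt τ (1 - t) with h | h
    · have := ((hif2 τ (1 - t)).sub (hif1 τ (1 - t)))
      rwa [intervalIntegrable_iff, uIoc_of_le h] at this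
    · rw [Ioc_eq_empty (by linarith)]
      exact integrableOn_empty
  have hg2int : IntegrableOn ((Ioi τ).indicator fun s => f2 s - f1 s) (Icc 0 (1 - t)) volume := by
    rw [IntegrableOn, integrable_indicator_iff hmeasIoi, IntegrableOn,
      Measure.restrict_restrict hmeasIoi]
    exact hint2.mono_set (fun x hx => ⟨hx.1, hx.2.2⟩)
  have hgint : IntegrableOn g (Icc 0 (1 - t)) volume :=
    (hg1int.integrableOn.add hg2int)
  -- pointwise bound
  have hptwise : ∀ x ∈ Icc (0 : ℝ) (1 - t),
      |(if 0 ≤ τ ∧ τ < t + x then (t + x - τ) ^ α else 0) -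
        (if 0 ≤ τ ∧ τ < x then (x - τ) ^ α else 0)| ≤ g x := by
    rintro x ⟨hx0, hx1⟩
    have he : t + x - τ = x - (τ - t) := by ring
    rcases lt_or_ge τ x with h1 | h1
    · have h2 : τ < t + x := by linarith
      rw [if_pos ⟨hτ0, h2⟩, if_pos ⟨hτ0, h1⟩, he]
      have hle : f1 x ≤ f2 x :=
        rpow_le_rpow_of_nonpos (by linarith) (by linarith) hα0
      rw [abs_sub_comm, abs_of_nonneg (by simpa [hf1, hf2] using sub_nonneg.2 hle)]
      have hg1 : (Ioc (τ - t) τ).indicator f1 x = 0 :=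
        indicator_of_notMem (fun hx => absurd hx.2 (not_le.2 h1)) _
      have hg2 : (Ioi τ).indicator (fun s => f2 s - f1 s) x = f2 x - f1 x :=
        indicator_of_mem h1 _
      show _ ≤ (Ioc (τ - t) τ).indicator f1 x + (Ioi τ).indicator (fun s => f2 s - f1 s) x
      rw [hg1, hg2, zero_add]
    · rw [if_neg (fun hc : 0 ≤ τ ∧ τ < x => absurd hc.2 (not_lt.2 h1))]
      rcases lt_or_ge τ (t + x) with h2 | h2
      · rw [if_pos (show 0 ≤ τ ∧ τ < t + x from ⟨hτ0, h2⟩), he, sub_zero,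
          abs_of_nonneg (rpow_nonneg (by linarith) _)]
        have hg1 : (Ioc (τ - t) τ).indicator f1 x = f1 x :=
          indicator_of_mem (mem_Ioc.2 ⟨by linarith, h1⟩) _
        have hg2 : (Ioi τ).indicator (fun s => f2 s - f1 s) x = 0 :=
          indicator_of_notMem (by simp [mem_Ioi]; linarith) _
        show _ ≤ (Ioc (τ - t) τ).indicator f1 x + (Ioi τ).indicator (fun s => f2 s - f1 s) x
        rw [hg1, hg2, add_zero]
      · rw [if_neg (fun hc : 0 ≤ τ ∧ τ < t + x => absurd hc.2 (not_lt.2 h2)), sub_zero, abs_zero]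
        have hg1 : (Ioc (τ - t) τ).indicator f1 x = 0 :=
          indicator_of_notMem (fun hx => absurd hx.1 (not_lt.2 (by linarith))) _
        have hg2 : (Ioi τ).indicator (fun s => f2 s - f1 s) x = 0 :=
          indicator_of_notMem (by simp [mem_Ioi]; linarith) _
        show _ ≤ (Ioc (τ - t) τ).indicator f1 x + (Ioi τ).indicator (fun s => f2 s - f1 s) x
        rw [hg1, hg2, add_zero]
  -- main estimate
  by_cases habs : IntegrableOn (fun s =>
      |(if 0 ≤ τ ∧ τ < t + s then (t + s - τ) ^ α else 0) -
        (if 0 ≤ τ ∧ τ < s then (s - τ) ^ α else 0)|) (Icc 0 (1 - t)) volume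
  · have hstep : (∫ s in Icc (0:ℝ) (1 - t),
        |(if 0 ≤ τ ∧ τ < t + s then (t + s - τ) ^ α else 0) -
          (if 0 ≤ τ ∧ τ < s then (s - τ) ^ α else 0)|) ≤ ∫ s in Icc (0:ℝ) (1 - t), g s :=
      setIntegral_mono_on habs hgint measurableSet_Icc hptwise
    have hsplit : (∫ s in Icc (0:ℝ) (1 - t), g s) =
        (∫ s in Icc (0:ℝ) (1 - t), (Ioc (τ - t) τ).indicator f1 s) +
        (∫ s in Icc (0:ℝ) (1 - t), (Ioi τ).indicator (fun s => f2 s - f1 s) s) :=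
      integral_add hg1int.integrableOn hg2int
    -- first piece
    have hb1 : (∫ s in Icc (0:ℝ) (1 - t), (Ioc (τ - t) τ).indicator f1 s) ≤
        t ^ (H + 1 / 2) / (H + 1 / 2) := by
      rw [setIntegral_indicator hmeasIoc]
      have hmono : (∫ s in Icc (0:ℝ) (1 - t) ∩ Ioc (τ - t) τ, f1 s) ≤
          ∫ s in Ioc (τ - t) τ, f1 s := by
        apply setIntegral_mono_set hint1
        · filter_upwards [ae_restrict_mem hmeasIoc] with x hx
          have : (0:ℝ) ≤ x - (τ - t) := by linarith [hx.1]
          simpa [hf1] using rpow_nonneg this α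
        · exact HasSubset.Subset.eventuallyLE (inter_subset_right)
      have hcalc : (∫ s in Ioc (τ - t) τ, f1 s) = t ^ (H + 1 / 2) / (H + 1 / 2) := by
        rw [← intervalIntegral.integral_of_le hτt]
        have := hcomp1 (τ - t) τ (τ - t)
        simp only [hf1] at this ⊢
        rw [this, sub_self, zero_rpow (by rw [hpe]; positivity), hpe]
        have : τ - (τ - t) = t := by ring
        rw [this, sub_zero]
      linarith [hmono, hcalc.le]
    -- second piece
    have hb2 : (∫ s in Icc (0:ℝ) (1 - t), (Ioi τ).indicator (fun s => f2 s - f1 s) s) ≤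
        t ^ (H + 1 / 2) / (H + 1 / 2) := by
      rw [setIntegral_indicator hmeasIoi]
      have hmono : (∫ s in Icc (0:ℝ) (1 - t) ∩ Ioi τ, f2 s - f1 s) ≤
          ∫ s in Ioc τ (1 - t), f2 s - f1 s := by
        apply setIntegral_mono_set hint2
        · filter_upwards [ae_restrict_mem measurableSet_Ioc] with x hx
          have : f1 x ≤ f2 x :=
            rpow_le_rpow_of_nonpos (sub_pos.2 hx.1) (by linarith) hα0
          simpa using sub_nonneg.2 this
        · exact HasSubset.Subset.eventuallyLE (fun x hx => ⟨hx.2, hx.1.2⟩)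
      have hcalc : (∫ s in Ioc τ (1 - t), f2 s - f1 s) ≤ t ^ (H + 1 / 2) / (H + 1 / 2) := by
        rcases le_or_gt τ (1 - t) with h | h
        · rw [← intervalIntegral.integral_of_le h,
            intervalIntegral.integral_sub (hif2 τ (1 - t)) (hif1 τ (1 - t))]
          have e2 : (∫ s in τ..(1 - t), f2 s) = ((1 - t - τ) ^ (H + 1/2) - 0) / (H + 1/2) := by
            simp only [hf2]
            rw [hcomp1 τ (1 - t) τ, sub_self, zero_rpow (by rw [hpe]; positivity), hpe]
          have e1 : (∫ s in τ..(1 - t), f1 s) =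
              ((1 - τ) ^ (H + 1/2) - t ^ (H + 1/2)) / (H + 1/2) := by
            simp only [hf1]
            rw [hcomp1 τ (1 - t) (τ - t), hpe]
            have e3 : 1 - t - (τ - t) = 1 - τ := by ring
            have e4 : τ - (τ - t) = t := by ring
            rw [e3, e4]
          rw [e2, e1]
          have hbase : (1 - t - τ) ^ (H + 1/2) ≤ (1 - τ) ^ (H + 1/2) :=
            rpow_le_rpow (by linarith) (by linarith) (by linarith)
          rw [div_sub_div_same, div_le_div_iff₀ hp hp]
          nlinarith [hbase]
        · rw [Ioc_eq_empty (by linarith), Measure.restrict_empty, integral_zero_measure]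
          positivity
      linarith [hmono, hcalc]
    have hC : t ^ (H + 1 / 2) / (H + 1 / 2) + t ^ (H + 1 / 2) / (H + 1 / 2) =
        2 / (H + 1 / 2) * t ^ (H + 1 / 2) := by ring
    linarith [hstep, hsplit.le, hb1, hb2, hC.le]
  · rw [integral_undef habs]
    positivity
end

section
/- Projection–volume inequality: let E be a Banach space, F ⊂ E a closed subspace, and K, H ⊂ E closed subspaces with K ∩ F = H ∩ F = {0} and K ⊕ F = H ⊕ F = E. Let Π_{H∥F} and Π_{K∥F} denote the corresponding bounded projections. Suppose g₁,…,g_p ∈ K are linearly independent and write g_q = h_q + f_q with h_q ∈ H, f_q ∈ F. Then ‖Π_{H∥F}‖^{-p} ≤ Vol_E(g₁,…,g_p) / Vol_E(h₁,…,h_p) ≤ ‖Π_{K∥F}‖^{p}. -/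
open Finset

/-- The volume of a finite family of vectors in a normed space:
`Vol(x₁,…,x_p) = ‖x₁‖ ∏_{q=2}^p d(x_q, span{x_1,…,x_{q-1}})`. -/
noncomputable def vol {E : Type*} [NormedAddCommGroup E] [NormedSpace ℝ E]
    {p : ℕ} (x : Fin p → E) : ℝ :=
  ∏ i : Fin p, Metric.infDist (x i) (Submodule.span ℝ (x '' {j | j < i}) : Set E)

/-- A bounded operator contracts inf-distances to spans up to its norm. -/
lemma infDist_map_span_le {E : Type*} [NormedAddCommGroup E] [NormedSpace ℝ E]
    (T : E →L[ℝ] E) (x : E) (s : Set E) :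
    Metric.infDist (T x) (Submodule.span ℝ (T '' s) : Set E) ≤
      ‖T‖ * Metric.infDist x (Submodule.span ℝ s : Set E) := by
  have hS : (Submodule.span ℝ s : Set E).Nonempty := ⟨0, Submodule.zero_mem _⟩
  set d := Metric.infDist x (Submodule.span ℝ s : Set E) with hd
  have hd0 : 0 ≤ d := Metric.infDist_nonneg
  refine le_of_forall_pos_le_add fun ε hε => ?_
  have hT0 : (0:ℝ) < ‖T‖ + 1 := by positivity
  have hlt : Metric.infDist x (Submodule.span ℝ s : Set E) < d + ε / (‖T‖ + 1) := by
    rw [← hd]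
    have : 0 < ε / (‖T‖ + 1) := by positivity
    linarith
  obtain ⟨y, hy, hxy⟩ := (Metric.infDist_lt_iff hS).mp hlt
  have hTy : T y ∈ (Submodule.span ℝ (T '' s) : Set E) := by
    rw [← ContinuousLinearMap.coe_coe, ← Submodule.map_span]
    exact Submodule.mem_map_of_mem hy
  have h1 : Metric.infDist (T x) (Submodule.span ℝ (T '' s) : Set E) ≤ dist (T x) (T y) :=
    Metric.infDist_le_dist_of_mem hTy
  have h2 : dist (T x) (T y) ≤ ‖T‖ * dist x y := by
    rw [dist_eq_norm, dist_eq_norm, ← map_sub]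
    exact T.le_opNorm _
  have hTnn : (0:ℝ) ≤ ‖T‖ := norm_nonneg _
  have h3 : ‖T‖ * dist x y ≤ ‖T‖ * (d + ε / (‖T‖ + 1)) :=
    mul_le_mul_of_nonneg_left hxy.le hTnn
  have h4 : ‖T‖ * (ε / (‖T‖ + 1)) ≤ ε := by
    rw [mul_div_assoc', div_le_iff₀ hT0]
    nlinarith
  nlinarith [mul_add ‖T‖ d (ε / (‖T‖ + 1))]

/-- The volume of a linearly independent family is positive. -/
lemma vol_pos_of_linearIndependent {E : Type*} [NormedAddCommGroup E] [NormedSpace ℝ E]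
    {p : ℕ} {x : Fin p → E} (hx : LinearIndependent ℝ x) : 0 < vol x := by
  rw [vol]
  apply Finset.prod_pos
  intro i _
  have hfin : (x '' {j | j < i}).Finite := (Set.finite_univ.subset (Set.subset_univ _)).image x
  haveI : FiniteDimensional ℝ (Submodule.span ℝ (x '' {j | j < i})) :=
    FiniteDimensional.span_of_finite ℝ hfin
  have hcl : IsClosed (Submodule.span ℝ (x '' {j | j < i}) : Set E) :=
    Submodule.closed_of_finiteDimensional _
  have hne : (Submodule.span ℝ (x '' {j | j < i}) : Set E).Nonempty := ⟨0, Submodule.zero_mem _⟩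
  have hnm : x i ∉ Submodule.span ℝ (x '' {j | j < i}) :=
    hx.notMem_span_image (by simp)
  exact (hcl.notMem_iff_infDist_pos hne).mp hnm

/-- Projection–volume inequality: let `E` be a Banach space, `F, K, H` closed
subspaces with `K ∩ F = H ∩ F = {0}` and `K ⊕ F = H ⊕ F = E`, and let
`Π_{H∥F}, Π_{K∥F}` be the corresponding bounded projections. If `g₁,…,g_p ∈ K`
are linearly independent and `g_q = h_q + f_q` with `h_q ∈ H`, `f_q ∈ F`, then
`‖Π_{H∥F}‖⁻ᵖ ≤ Vol(g₁,…,g_p)/Vol(h₁,…,h_p) ≤ ‖Π_{K∥F}‖ᵖ`. -/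
theorem projection_volume_inequality {E : Type*} [NormedAddCommGroup E] [NormedSpace ℝ E]
    [CompleteSpace E] (F K H : Submodule ℝ E)
    (hFc : IsClosed (F : Set E)) (hKc : IsClosed (K : Set E)) (hHc : IsClosed (H : Set E))
    (hKF : K ⊓ F = ⊥) (hHF : H ⊓ F = ⊥) (hKFtop : K ⊔ F = ⊤) (hHFtop : H ⊔ F = ⊤)
    (PH PK : E →L[ℝ] E)
    (hPH : ∀ x : E, PH x ∈ H ∧ x - PH x ∈ F)
    (hPK : ∀ x : E, PK x ∈ K ∧ x - PK x ∈ F)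
    {p : ℕ} (g h f : Fin p → E)
    (hg : ∀ q, g q ∈ K) (hh : ∀ q, h q ∈ H) (hf : ∀ q, f q ∈ F)
    (hdecomp : ∀ q, g q = h q + f q)
    (hind : LinearIndependent ℝ g) :
    ‖PH‖⁻¹ ^ p ≤ vol g / vol h ∧ vol g / vol h ≤ ‖PK‖ ^ p := by
  -- PH (g q) = h q
  have hPHg : ∀ q, PH (g q) = h q := by
    intro q
    have hmemF : PH (g q) - h q ∈ F := by
      have h1 : g q - PH (g q) ∈ F := (hPH (g q)).2
      have h2 : g q - h q ∈ F := by
        rw [hdecomp q]; simpa using hf q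
      have := F.sub_mem h2 h1
      simpa using this
    have hmemH : PH (g q) - h q ∈ H := H.sub_mem (hPH (g q)).1 (hh q)
    have : PH (g q) - h q ∈ H ⊓ F := ⟨hmemH, hmemF⟩
    rw [hHF] at this
    exact sub_eq_zero.mp (by simpa using this)
  -- PK (h q) = g q
  have hPKh : ∀ q, PK (h q) = g q := by
    intro q
    have hmemF : PK (h q) - g q ∈ F := by
      have h1 : h q - PK (h q) ∈ F := (hPK (h q)).2
      have h2 : g q - h q ∈ F := by
        rw [hdecomp q]; simpa using hf q
      have := F.neg_mem (F.add_mem h1 h2)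
      have heq : -(h q - PK (h q) + (g q - h q)) = PK (h q) - g q := by abel
      rwa [heq] at this
    have hmemK : PK (h q) - g q ∈ K := K.sub_mem (hPK (h q)).1 (hg q)
    have : PK (h q) - g q ∈ K ⊓ F := ⟨hmemK, hmemF⟩
    rw [hKF] at this
    exact sub_eq_zero.mp (by simpa using this)
  have hgPK : g = ⇑PK ∘ h := by funext q; simp [hPKh q]
  have hhPH : h = ⇑PH ∘ g := by funext q; simp [hPHg q]
  -- h is linearly independent
  have hindh : LinearIndependent ℝ h := by
    apply LinearIndependent.of_comp (PK : E →ₗ[ℝ] E)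
    have : (⇑(PK : E →ₗ[ℝ] E)) ∘ h = g := by funext q; simp [hPKh q]
    rwa [this]
  -- per-factor inequalities
  have hB_le : ∀ q : Fin p,
      Metric.infDist (h q) (Submodule.span ℝ (h '' {j | j < q}) : Set E) ≤
        ‖PH‖ * Metric.infDist (g q) (Submodule.span ℝ (g '' {j | j < q}) : Set E) := by
    intro q
    have him : h '' {j | j < q} = ⇑PH '' (g '' {j | j < q}) := by
      rw [hhPH, Set.image_comp]
    rw [him, hhPH]
    exact infDist_map_span_le PH (g q) _
  have hA_le : ∀ q : Fin p,
      Metric.infDist (g q) (Submodule.span ℝ (g '' {j | j < q}) : Set E) ≤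
        ‖PK‖ * Metric.infDist (h q) (Submodule.span ℝ (h '' {j | j < q}) : Set E) := by
    intro q
    have him : g '' {j | j < q} = ⇑PK '' (h '' {j | j < q}) := by
      rw [hgPK, Set.image_comp]
    rw [him, hgPK]
    exact infDist_map_span_le PK (h q) _
  have hvg : 0 < vol g := vol_pos_of_linearIndependent hind
  have hvh : 0 < vol h := vol_pos_of_linearIndependent hindh
  -- vol g ≤ ‖PK‖^p * vol h
  have hupper : vol g ≤ ‖PK‖ ^ p * vol h := by
    rw [vol, vol]
    calc (∏ i : Fin p, Metric.infDist (g i) (Submodule.span ℝ (g '' {j | j < i}) : Set E))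
        ≤ ∏ i : Fin p, ‖PK‖ * Metric.infDist (h i) (Submodule.span ℝ (h '' {j | j < i}) : Set E) :=
          Finset.prod_le_prod (fun i _ => Metric.infDist_nonneg) (fun i _ => hA_le i)
      _ = ‖PK‖ ^ p * ∏ i : Fin p,
            Metric.infDist (h i) (Submodule.span ℝ (h '' {j | j < i}) : Set E) := by
          rw [Finset.prod_mul_distrib, Finset.prod_const, Finset.card_univ, Fintype.card_fin]
  -- vol h ≤ ‖PH‖^p * vol g
  have hlower : vol h ≤ ‖PH‖ ^ p * vol g := by
    rw [vol, vol]
    calc (∏ i : Fin p, Metric.infDist (h i) (Submodule.span ℝ (h '' {j | j < i}) : Set E))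
        ≤ ∏ i : Fin p, ‖PH‖ * Metric.infDist (g i) (Submodule.span ℝ (g '' {j | j < i}) : Set E) :=
          Finset.prod_le_prod (fun i _ => Metric.infDist_nonneg) (fun i _ => hB_le i)
      _ = ‖PH‖ ^ p * ∏ i : Fin p,
            Metric.infDist (g i) (Submodule.span ℝ (g '' {j | j < i}) : Set E) := by
          rw [Finset.prod_mul_distrib, Finset.prod_const, Finset.card_univ, Fintype.card_fin]
  constructor
  · have hPHpos : 0 < ‖PH‖ ^ p := by
      by_contra hc
      push_neg at hc
      have h0 : ‖PH‖ ^ p = 0 := le_antisymm hc (by positivity)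
      rw [h0, zero_mul] at hlower
      linarith
    rw [inv_pow, le_div_iff₀ hvh, inv_mul_le_iff₀ hPHpos]
    linarith
  · rw [div_le_iff₀ hvh]
    exact hupper
end
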